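/- Let α = (1+√−7)/2 and let M be a rank-3 Hermitian ℤ[α]-lattice with Hermitian minimum 2, Gram matrix entries h(e_i,e_j) ∈ (1/√−7)ℤ[α] for i ≠ j, diagonal entries equal to 2, and such that every rank-2 section has discriminant ≥ 12/7. If M has Gram matrix [[2, 4/√−7, a/√−7], [−4/√−7, 2, b/√−7], [−ā/√−7, −b̄/√−7, 2]] with a, b ∈ ℤ[α] of norm at most 16, then det of this Gram matrix is not equal to 6/7. -/
import Mathlib

open Matrix Complex
open scoped ComplexOrder

/-- √−7, realized in ℂ. -/
noncomputable def s7 : ℂ := Complex.I * Real.sqrt 7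

/-- α = (1+√−7)/2, a root of α² − α + 2 = 0, realized in ℂ. -/
noncomputable def α7 : ℂ := (1 + s7) / 2

/-- The ring of integers ℤ[α] of ℚ(√−7), as a subset of ℂ. -/
noncomputable def O7 : Set ℂ := {z | ∃ a b : ℤ, z = (a : ℂ) + (b : ℂ) * α7}

lemma s7_sq : s7 * s7 = -7 := by
  simp only [s7]
  rw [show Complex.I * ↑(Real.sqrt 7) * (Complex.I * ↑(Real.sqrt 7)) =
    (Complex.I * Complex.I) * (((Real.sqrt 7 : ℝ) * (Real.sqrt 7 : ℝ) : ℝ) : ℂ) by push_cast; ring,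
    Complex.I_mul_I, Real.mul_self_sqrt (by norm_num)]
  norm_num

lemma s7_ne : s7 ≠ 0 := fun h => by have := s7_sq; rw [h] at this; norm_num at this

lemma conj_s7 : (starRingEnd ℂ) s7 = -s7 := by simp [s7]

lemma conj_α7 : (starRingEnd ℂ) α7 = 1 - α7 := by
  simp only [α7, map_div₀, map_add, _root_.map_one, conj_s7, map_ofNat]
  ring

lemma hdiv7 : ∀ z : ℂ, z / s7 = z * s7 * (-1/7) := by
  intro z
  rw [div_eq_iff s7_ne]
  linear_combination (z/7) * s7_sq

lemma enum19 : ∀ a1 ∈ Finset.Icc (-5:ℤ) 5, ∀ a2 ∈ Finset.Icc (-3:ℤ) 3,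
    ∀ b1 ∈ Finset.Icc (-5:ℤ) 5, ∀ b2 ∈ Finset.Icc (-3:ℤ) 3,
    a1^2+a1*a2+2*a2^2 ≤ 16 → b1^2+b1*b2+2*b2^2 ≤ 16 →
    (a1^2+a1*a2+2*a2^2) + (b1^2+b1*b2+2*b2^2) - 2*(a1*b2-a2*b1) = 9 →
    (a1 = -3 ∧ a2 = 0 ∧ b1 = 0 ∧ b2 = 0) ∨ (a1 = 3 ∧ a2 = 0 ∧ b1 = 0 ∧ b2 = 0) ∨
    (a1 = 0 ∧ a2 = 0 ∧ b1 = -3 ∧ b2 = 0) ∨ (a1 = 0 ∧ a2 = 0 ∧ b1 = 3 ∧ b2 = 0) := by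
  decide

set_option maxHeartbeats 2000000 in
/-- Let M be a rank-3 Hermitian ℤ[α]-lattice with Gram matrix
[[2, 4/√−7, a/√−7], [−4/√−7, 2, b/√−7], [−ā/√−7, −b̄/√−7, 2]], where
a, b ∈ ℤ[α] have norm a·ā, b·b̄ at most 16, with Hermitian minimum 2, and such
that every rank-2 section has discriminant ≥ 12/7.  Then det M ≠ 6/7. -/
theorem stmt19 (a b : ℂ) (ha : a ∈ O7) (hb : b ∈ O7)
    (hNa : Complex.normSq a ≤ 16) (hNb : Complex.normSq b ≤ 16)
    (M : Matrix (Fin 3) (Fin 3) ℂ)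
    (hM : M = !![2, 4 / s7, a / s7;
                 -4 / s7, 2, b / s7;
                 -((starRingEnd ℂ) a) / s7, -((starRingEnd ℂ) b) / s7, 2])
    (hmin : IsLeast {x : ℝ | ∃ v : Fin 3 → ℂ, (∀ i, v i ∈ O7) ∧ v ≠ 0 ∧
      (star v ⬝ᵥ M.mulVec v).re = x} 2)
    (hd2 : ∀ x : Fin 2 → Fin 3 → ℂ, (∀ t i, x t i ∈ O7) → LinearIndependent ℂ x →
      12 / 7 ≤ ((Matrix.of fun s t => star (x s) ⬝ᵥ M.mulVec (x t)).det).re) :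
    M.det ≠ (6 / 7 : ℂ) := by
  intro hdet
  obtain ⟨a1, a2, rfl⟩ := ha
  obtain ⟨b1, b2, rfl⟩ := hb
  have hα : α7 = (1 + s7) / 2 := rfl
  have hca : (starRingEnd ℂ) ((a1:ℂ) + (a2:ℂ) * α7) = (a1:ℂ) + (a2:ℂ) * (1 - α7) := by
    simp [conj_α7]
  have hcb : (starRingEnd ℂ) ((b1:ℂ) + (b2:ℂ) * α7) = (b1:ℂ) + (b2:ℂ) * (1 - α7) := by
    simp [conj_α7]
  -- norm bounds as integers
  have hna : ((Complex.normSq ((a1:ℂ) + (a2:ℂ) * α7) : ℝ) : ℂ)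
      = (((a1^2+a1*a2+2*a2^2 : ℤ) : ℝ) : ℂ) := by
    rw [← Complex.mul_conj, hca, hα]
    push_cast
    linear_combination (-(a2:ℂ)^2/4) * s7_sq
  have hnb : ((Complex.normSq ((b1:ℂ) + (b2:ℂ) * α7) : ℝ) : ℂ)
      = (((b1^2+b1*b2+2*b2^2 : ℤ) : ℝ) : ℂ) := by
    rw [← Complex.mul_conj, hcb, hα]
    push_cast
    linear_combination (-(b2:ℂ)^2/4) * s7_sq
  have hNa' : (a1^2+a1*a2+2*a2^2 : ℤ) ≤ 16 := by
    have h1 : Complex.normSq ((a1:ℂ) + (a2:ℂ) * α7) = ((a1^2+a1*a2+2*a2^2 : ℤ) : ℝ) :=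
      Complex.ofReal_inj.mp hna
    rw [h1] at hNa
    exact_mod_cast hNa
  have hNb' : (b1^2+b1*b2+2*b2^2 : ℤ) ≤ 16 := by
    have h1 : Complex.normSq ((b1:ℂ) + (b2:ℂ) * α7) = ((b1^2+b1*b2+2*b2^2 : ℤ) : ℝ) :=
      Complex.ofReal_inj.mp hnb
    rw [h1] at hNb
    exact_mod_cast hNb
  -- the determinant equation, as an integer equation
  have hd7 : 7 * M.det = (((24 - 2*(a1^2+a1*a2+2*a2^2) - 2*(b1^2+b1*b2+2*b2^2)
      + 4*(a1*b2-a2*b1) : ℤ)) : ℂ) := by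
    rw [hM, Matrix.det_fin_three]
    simp only [Matrix.of_apply, Matrix.cons_val', Matrix.cons_val_zero, Matrix.cons_val_one, Matrix.head_cons,
      Matrix.empty_val', Matrix.cons_val_fin_one, Matrix.head_fin_const, Matrix.cons_val_two,
      Matrix.tail_cons, hca, hcb, hdiv7]
    rw [hα]
    push_cast
    linear_combination ((32/7 : ℂ) + (4/7)*(b2:ℂ)*(b2:ℂ) + (-1/14)*(b2:ℂ)*(b2:ℂ)*s7*s7
      + (2/7)*(b1:ℂ)*(b2:ℂ) + (2/7)*(b1:ℂ)*(b1:ℂ) + (4/7)*(a2:ℂ)*(b1:ℂ)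
      + (-4/49)*(a2:ℂ)*(b1:ℂ)*s7*s7 + (4/7)*(a2:ℂ)*(a2:ℂ) + (-1/14)*(a2:ℂ)*(a2:ℂ)*s7*s7
      + (-4/7)*(a1:ℂ)*(b2:ℂ) + (4/49)*(a1:ℂ)*(b2:ℂ)*s7*s7 + (2/7)*(a1:ℂ)*(a2:ℂ)
      + (2/7)*(a1:ℂ)*(a1:ℂ)) * s7_sq
  have hdz : (24 - 2*(a1^2+a1*a2+2*a2^2) - 2*(b1^2+b1*b2+2*b2^2) + 4*(a1*b2-a2*b1) : ℤ) = 6 := by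
    have : (((24 - 2*(a1^2+a1*a2+2*a2^2) - 2*(b1^2+b1*b2+2*b2^2)
        + 4*(a1*b2-a2*b1) : ℤ)) : ℂ) = ((6 : ℤ) : ℂ) := by
      rw [← hd7, hdet]; norm_num
    exact_mod_cast this
  have heq : (a1^2+a1*a2+2*a2^2) + (b1^2+b1*b2+2*b2^2) - 2*(a1*b2-a2*b1) = 9 := by omega
  -- coefficient bounds
  have hb1a : (2*a1+a2)^2 + 7*a2^2 ≤ 64 := by nlinarith [hNa']
  have hb1b : (2*b1+b2)^2 + 7*b2^2 ≤ 64 := by nlinarith [hNb']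
  have ha2u : a2 ≤ 3 := by nlinarith [sq_nonneg (a2-4), sq_nonneg (2*a1+a2)]
  have ha2l : -3 ≤ a2 := by nlinarith [sq_nonneg (a2+4), sq_nonneg (2*a1+a2)]
  have hb2u : b2 ≤ 3 := by nlinarith [sq_nonneg (b2-4), sq_nonneg (2*b1+b2)]
  have hb2l : -3 ≤ b2 := by nlinarith [sq_nonneg (b2+4), sq_nonneg (2*b1+b2)]
  have hsa : 2*a1+a2 ≤ 8 := by nlinarith [sq_nonneg (2*a1+a2-8), sq_nonneg a2]
  have hsa' : -8 ≤ 2*a1+a2 := by nlinarith [sq_nonneg (2*a1+a2+8), sq_nonneg a2]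
  have hsb : 2*b1+b2 ≤ 8 := by nlinarith [sq_nonneg (2*b1+b2-8), sq_nonneg b2]
  have hsb' : -8 ≤ 2*b1+b2 := by nlinarith [sq_nonneg (2*b1+b2+8), sq_nonneg b2]
  have ha1m : a1 ∈ Finset.Icc (-5:ℤ) 5 := Finset.mem_Icc.mpr ⟨by omega, by omega⟩
  have ha2m : a2 ∈ Finset.Icc (-3:ℤ) 3 := Finset.mem_Icc.mpr ⟨ha2l, ha2u⟩
  have hb1m : b1 ∈ Finset.Icc (-5:ℤ) 5 := Finset.mem_Icc.mpr ⟨by omega, by omega⟩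
  have hb2m : b2 ∈ Finset.Icc (-3:ℤ) 3 := Finset.mem_Icc.mpr ⟨hb2l, hb2u⟩
  have hcases := enum19 a1 ha1m a2 ha2m b1 hb1m b2 hb2m hNa' hNb' heq
  -- in each case, exhibit a vector of norm 1, contradicting the minimum 2
  have key : ∀ v : Fin 3 → ℂ, (∀ i, v i ∈ O7) → v ≠ 0 →
      star v ⬝ᵥ M.mulVec v = 1 → False := by
    intro v h1 h2 h3
    have : (2:ℝ) ≤ 1 := hmin.2 ⟨v, h1, h2, by rw [h3]; simp⟩
    linarith
  have hm1 : ((-1:ℂ) + α7) ∈ O7 := ⟨-1, 1, by push_cast; ring⟩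
  have hm2 : ((1:ℂ)) ∈ O7 := ⟨1, 0, by push_cast; ring⟩
  have hm3 : ((-1:ℂ)) ∈ O7 := ⟨-1, 0, by push_cast; ring⟩
  rcases hcases with ⟨e1, e2, e3, e4⟩ | ⟨e1, e2, e3, e4⟩ | ⟨e1, e2, e3, e4⟩ | ⟨e1, e2, e3, e4⟩ <;>
      subst e1 e2 e3 e4
  · refine key ![(-1:ℂ) + α7, 1, -1] (fun i => by fin_cases i <;> assumption)
      (fun h => by simpa using congrFun h 1) ?_
    rw [hM]
    simp only [Matrix.mulVec, dotProduct, Fin.sum_univ_three, Pi.star_apply,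
      Matrix.of_apply, Matrix.cons_val', Matrix.cons_val_zero, Matrix.cons_val_one, Matrix.head_cons,
      Matrix.empty_val', Matrix.cons_val_fin_one, Matrix.head_fin_const, Matrix.cons_val_two,
      Matrix.tail_cons, hca, hcb, hdiv7, star_add, star_neg, star_one, RCLike.star_def,
      conj_α7, conj_s7, map_add, map_neg, _root_.map_one, map_div₀, _root_.map_mul,
      map_ofNat, map_intCast]
    rw [hα]
    push_cast
    linear_combination (1/2 : ℂ) * s7_sq
  · refine key ![(-1:ℂ) + α7, 1, 1] (fun i => by fin_cases i <;> assumption)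
      (fun h => by simpa using congrFun h 1) ?_
    rw [hM]
    simp only [Matrix.mulVec, dotProduct, Fin.sum_univ_three, Pi.star_apply,
      Matrix.of_apply, Matrix.cons_val', Matrix.cons_val_zero, Matrix.cons_val_one, Matrix.head_cons,
      Matrix.empty_val', Matrix.cons_val_fin_one, Matrix.head_fin_const, Matrix.cons_val_two,
      Matrix.tail_cons, hca, hcb, hdiv7, star_add, star_neg, star_one, RCLike.star_def,
      conj_α7, conj_s7, map_add, map_neg, _root_.map_one, map_div₀, _root_.map_mul,
      map_ofNat, map_intCast]
    rw [hα]
    push_cast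
    linear_combination (1/2 : ℂ) * s7_sq
  · refine key ![(-1:ℂ), (-1:ℂ) + α7, -1] (fun i => by fin_cases i <;> assumption)
      (fun h => by simpa using congrFun h 0) ?_
    rw [hM]
    simp only [Matrix.mulVec, dotProduct, Fin.sum_univ_three, Pi.star_apply,
      Matrix.of_apply, Matrix.cons_val', Matrix.cons_val_zero, Matrix.cons_val_one, Matrix.head_cons,
      Matrix.empty_val', Matrix.cons_val_fin_one, Matrix.head_fin_const, Matrix.cons_val_two,
      Matrix.tail_cons, hca, hcb, hdiv7, star_add, star_neg, star_one, RCLike.star_def,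
      conj_α7, conj_s7, map_add, map_neg, _root_.map_one, map_div₀, _root_.map_mul,
      map_ofNat, map_intCast]
    rw [hα]
    push_cast
    linear_combination (1/2 : ℂ) * s7_sq
  · refine key ![(-1:ℂ), (-1:ℂ) + α7, 1] (fun i => by fin_cases i <;> assumption)
      (fun h => by simpa using congrFun h 0) ?_
    rw [hM]
    simp only [Matrix.mulVec, dotProduct, Fin.sum_univ_three, Pi.star_apply,
      Matrix.of_apply, Matrix.cons_val', Matrix.cons_val_zero, Matrix.cons_val_one, Matrix.head_cons,
      Matrix.empty_val', Matrix.cons_val_fin_one, Matrix.head_fin_const, Matrix.cons_val_two,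
      Matrix.tail_cons, hca, hcb, hdiv7, star_add, star_neg, star_one, RCLike.star_def,
      conj_α7, conj_s7, map_add, map_neg, _root_.map_one, map_div₀, _root_.map_mul,
      map_ofNat, map_intCast]
    rw [hα]
    push_cast
    linear_combination (1/2 : ℂ) * s7_sq
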